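/- arXiv:1310.8271 — 4 statements merged into one kernel-verified Lean document; each statement's English description precedes it below -/
import Mathlib

section
/- Let (λ_n)_{n≥0} be a square-summable sequence of complex numbers such that for every square-summable complex sequence (a_n)_{n≥0} one has the contraction inequality ∑_{n=0}^∞ |∑_{j=0}^n a_j λ_{n-j}|² ≤ ∑_{n=0}^∞ |a_n|². Then the power series φ(z) = ∑_{n=0}^∞ λ_n z^n converges for every complex z with |z| < 1, and |φ(z)| ≤ 1 for all |z| < 1. -/
/-!
Test the contraction against the reproducing kernel `a j = conj z ^ j` of the Hardy space at `z`,
whose squared `ℓ²` norm is `B = (1 - ‖z‖²)⁻¹`. The Cauchy product `c` of `a` and `λ` is the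
coefficient sequence of `φ(w) / (1 - conj z * w)`, so evaluating at `w = z` gives
`∑ c n * z ^ n = B * φ(z)`. The contraction gives `∑ ‖c n‖² ≤ B`, and `∑ ‖z ^ n‖² = B` as well,
so `B * ‖φ(z)‖ ≤ B`.
-/

open Finset

section SquareSummable

variable {ι R : Type*} [NormedRing R] {f g : ι → R}

lemma norm_mul_le_half_add_sq (x y : R) : ‖x * y‖ ≤ (‖x‖ ^ 2 + ‖y‖ ^ 2) / 2 := by
  have := two_mul_le_add_sq ‖x‖ ‖y‖
  linarith [norm_mul_le x y]

lemma summable_norm_mul_of_summable_sq_norm (hf : Summable fun i => ‖f i‖ ^ 2)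
    (hg : Summable fun i => ‖g i‖ ^ 2) : Summable fun i => ‖f i * g i‖ :=
  ((hf.add hg).div_const 2).of_nonneg_of_le (fun _ => norm_nonneg _)
    fun i => norm_mul_le_half_add_sq (f i) (g i)

/-- A substitute for Cauchy–Schwarz, sharp when both sequences have the same `ℓ²` norm. -/
lemma norm_tsum_mul_le_of_hasSum_sq_norm {A B : ℝ} (hf : HasSum (fun i => ‖f i‖ ^ 2) A)
    (hg : HasSum (fun i => ‖g i‖ ^ 2) B) : ‖∑' i, f i * g i‖ ≤ (A + B) / 2 :=
  tsum_of_norm_bounded ((hf.add hg).div_const 2) fun i => norm_mul_le_half_add_sq (f i) (g i)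

end SquareSummable

/-- Young's inequality `ℓ¹ * ℓ² ⊆ ℓ²` for the Cauchy product, qualitatively. -/
lemma summable_sq_norm_sum_range_mul {R : Type*} [NormedRing R] {f g : ℕ → R}
    (hf : Summable fun n => ‖f n‖) (hg : Summable fun n => ‖g n‖ ^ 2) :
    Summable fun n => ‖∑ j ∈ range (n + 1), f j * g (n - j)‖ ^ 2 := by
  have hmajorant : Summable fun n => ∑ j ∈ range (n + 1), ‖f j‖ * ‖g (n - j)‖ ^ 2 :=
    (summable_norm_sum_mul_range_of_summable_norm (f := fun n => ‖f n‖)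
      (g := fun n => ‖g n‖ ^ 2) (by simpa using hf) (by simpa using hg)).of_norm
  refine (hmajorant.mul_left (∑' j, ‖f j‖)).of_nonneg_of_le (fun _ => sq_nonneg _) fun n => ?_
  have htriangle : ‖∑ j ∈ range (n + 1), f j * g (n - j)‖
      ≤ ∑ j ∈ range (n + 1), ‖f j‖ * ‖g (n - j)‖ :=
    (norm_sum_le _ _).trans (sum_le_sum fun j _ => norm_mul_le _ _)
  have hcauchySchwarz : (∑ j ∈ range (n + 1), ‖f j‖ * ‖g (n - j)‖) ^ 2
      ≤ (∑ j ∈ range (n + 1), ‖f j‖) * ∑ j ∈ range (n + 1), ‖f j‖ * ‖g (n - j)‖ ^ 2 :=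
    sum_sq_le_sum_mul_sum_of_sq_le_mul _ (fun _ _ => norm_nonneg _)
      (fun _ _ => by positivity) fun _ _ => le_of_eq (by ring)
  calc ‖∑ j ∈ range (n + 1), f j * g (n - j)‖ ^ 2
      ≤ (∑ j ∈ range (n + 1), ‖f j‖ * ‖g (n - j)‖) ^ 2 := by gcongr
    _ ≤ _ := hcauchySchwarz
    _ ≤ _ := by
      gcongr
      exact hf.sum_le_tsum _ fun _ _ => norm_nonneg _

lemma tsum_sum_range_mul_mul_pow {R : Type*} [NormedCommRing R] [CompleteSpace R]
    {a b : ℕ → R} {z : R} (ha : Summable fun n => ‖a n * z ^ n‖)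
    (hb : Summable fun n => ‖b n * z ^ n‖) :
    ∑' n, (∑ j ∈ range (n + 1), a j * b (n - j)) * z ^ n
      = (∑' n, a n * z ^ n) * ∑' n, b n * z ^ n := by
  rw [tsum_mul_tsum_eq_tsum_sum_range_of_summable_norm ha hb]
  refine tsum_congr fun n => ?_
  rw [sum_mul]
  refine sum_congr rfl fun j hj => ?_
  rw [← pow_mul_pow_sub z (Nat.lt_succ_iff.mp (mem_range.mp hj))]
  ring

lemma hasSum_sq_norm_pow {K : Type*} [NormedDivisionRing K] {z : K} (hz : ‖z‖ < 1) :
    HasSum (fun n : ℕ => ‖z ^ n‖ ^ 2) (1 - ‖z‖ ^ 2)⁻¹ := by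
  simp_rw [norm_pow, ← pow_mul, mul_comm _ 2, pow_mul]
  exact hasSum_geometric_of_lt_one (by positivity) (by nlinarith [norm_nonneg z])

lemma tsum_conj_pow_mul_pow {z : ℂ} (hz : ‖z‖ < 1) :
    ∑' n : ℕ, (starRingEnd ℂ z) ^ n * z ^ n = ((1 - ‖z‖ ^ 2)⁻¹ : ℝ) := by
  have hnorm : ‖(‖z‖ : ℂ) ^ 2‖ < 1 := by
    rw [norm_pow, Complex.norm_real, Real.norm_of_nonneg (norm_nonneg z)]
    nlinarith [norm_nonneg z]
  simp_rw [← mul_pow, Complex.conj_mul', tsum_geometric_of_norm_lt_one hnorm]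
  push_cast
  rfl

/-- If `(λ_n)` is square-summable and the Cauchy product with any square-summable
sequence `(a_n)` satisfies the contraction inequality
`∑_n |∑_{j=0}^n a_j λ_{n-j}|² ≤ ∑_n |a_n|²`, then the power series `∑ λ_n z^n`
converges on the open unit disk and its sum is bounded by one there. -/
theorem contraction_implies_bounded_by_one (l : ℕ → ℂ)
    (hl : Summable fun n => ‖l n‖ ^ 2)
    (hcontr : ∀ a : ℕ → ℂ, Summable (fun n => ‖a n‖ ^ 2) →
      ∑' n : ℕ, ‖∑ j ∈ Finset.range (n + 1), a j * l (n - j)‖ ^ 2 ≤ ∑' n : ℕ, ‖a n‖ ^ 2) :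
    ∀ z : ℂ, ‖z‖ < 1 →
      Summable (fun n : ℕ => l n * z ^ n) ∧ ‖∑' n : ℕ, l n * z ^ n‖ ≤ 1 := by
  intro z hz
  set B : ℝ := (1 - ‖z‖ ^ 2)⁻¹
  have hB : 0 < B := inv_pos.mpr (by nlinarith [norm_nonneg z])
  have hpow := hasSum_sq_norm_pow hz
  have hkernel : HasSum (fun n : ℕ => ‖(starRingEnd ℂ z) ^ n‖ ^ 2) B := by
    simpa [Complex.norm_conj] using hasSum_sq_norm_pow (z := starRingEnd ℂ z) (by simpa using hz)
  have hφ : Summable fun n => ‖l n * z ^ n‖ :=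
    summable_norm_mul_of_summable_sq_norm hl hpow.summable
  refine ⟨hφ.of_norm, ?_⟩
  set c := fun n => ∑ j ∈ range (n + 1), (starRingEnd ℂ z) ^ j * l (n - j)
  have hc : Summable fun n => ‖c n‖ ^ 2 :=
    summable_sq_norm_sum_range_mul (summable_norm_geometric_of_norm_lt_one (by simpa using hz)) hl
  have hcB : ∑' n, ‖c n‖ ^ 2 ≤ B := hkernel.tsum_eq ▸ hcontr _ hkernel.summable
  have hgen : ∑' n, c n * z ^ n = B * ∑' n, l n * z ^ n := by
    rw [tsum_sum_range_mul_mul_pow _ hφ, tsum_conj_pow_mul_pow hz]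
    have hw : ‖starRingEnd ℂ z * z‖ < 1 := by
      rw [norm_mul, Complex.norm_conj]
      nlinarith [norm_nonneg z]
    simpa [← mul_pow] using summable_norm_geometric_of_norm_lt_one hw
  have hbound : ‖∑' n, c n * z ^ n‖ ≤ B := by
    linarith [norm_tsum_mul_le_of_hasSum_sq_norm hc.hasSum hpow]
  rw [hgen, norm_mul, Complex.norm_real, Real.norm_of_nonneg hB.le] at hbound
  exact le_of_mul_le_mul_left (by simpa using hbound) hB
end

section
/- Let φ be an analytic function on the open unit disk 𝔻 = {z ∈ ℂ : |z| < 1} with |φ(z)| ≤ 1 for all z ∈ 𝔻, and let (λ_n)_{n≥0} be its Taylor coefficients at 0, i.e. φ(z) = ∑_{n=0}^∞ λ_n z^n for z ∈ 𝔻. Assume moreover that ∑_{n=0}^∞ |λ_n|² = 1. Then (λ_n) satisfies condition (c): for every square-summable complex sequence (a_n)_{n≥0}, ∑_{n=0}^∞ |∑_{j=0}^n a_j λ_{n-j}|² = ∑_{n=0}^∞ |a_n|². -/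
/-!
Multiplication by `φ` does not increase the `H²` norm: comparing Parseval's identity on circles of
radius `r < 1` and letting `r → 1`, a power series bounded in modulus on the disk by a polynomial
`p` has `ℓ²` norm at most that of the coefficients of `p`. Applied to `(1 + c z ^ m) φ`, whose
coefficients are `λ + c Sᵐ λ` (`S` the unilateral shift), this gives
`‖λ + c Sᵐ λ‖² ≤ 1 + |c|² = ‖λ‖² + |c|² ‖Sᵐ λ‖²` for every `c ∈ ℂ`, which forces `⟪λ, Sᵐ λ⟫ = 0`
for `m > 0`. Hence the shifts `Sʲ λ` are orthonormal in `ℓ²`, and `a ↦ ∑ⱼ aⱼ Sʲ λ`, whose `n`-th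
coordinate is the Cauchy product `∑_{j ≤ n} aⱼ λ_{n-j}`, is an isometry.
-/

open Polynomial Real Filter Topology
open scoped lp InnerProductSpace

/-- Condition (c): for every square-summable complex sequence `a`, the
Cauchy product of `a` with `l` has the same `ℓ²` sum as `a`. -/
def ConditionC (l : ℕ → ℂ) : Prop :=
  ∀ a : ℕ → ℂ, Summable (fun n => ‖a n‖ ^ 2) →
    ∑' n : ℕ, ‖∑ j ∈ Finset.range (n + 1), a j * l (n - j)‖ ^ 2 = ∑' n : ℕ, ‖a n‖ ^ 2

theorem circleAverage_norm_eval_sq (p : ℂ[X]) {s : Finset ℕ} (hs : p.support ⊆ s) (r : ℝ) :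
    circleAverage (fun z ↦ ‖p.eval z‖ ^ 2) 0 r = ∑ i ∈ s, ‖p.coeff i‖ ^ 2 * r ^ (2 * i) := by
  rw [circleAverage_eq_circleAverage_zero_one]
  have h := (p.comp (C (r : ℂ) * X)).sum_sq_norm_coeff_eq_circleAverage
  simp only [eval_comp, eval_mul, eval_C, eval_X, comp_C_mul_X_coeff] at h
  simp only [add_zero, ← h]
  refine Finset.sum_subset (fun i hi ↦ hs ?_) (fun i _ hi ↦ ?_) |>.trans
    (Finset.sum_congr rfl fun i _ ↦ ?_)
  · simp_all
  · rw [notMem_support_iff, comp_C_mul_X_coeff] at hi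
    simp [hi]
  · rw [norm_mul, mul_pow, norm_pow, Complex.norm_real, Real.norm_eq_abs, ← pow_mul, pow_mul',
      sq_abs, ← pow_mul]

theorem circleAverage_norm_sum_range_sq (μ : ℕ → ℂ) (N : ℕ) (r : ℝ) :
    circleAverage (fun z ↦ ‖∑ n ∈ Finset.range N, μ n * z ^ n‖ ^ 2) 0 r =
      ∑ n ∈ Finset.range N, ‖μ n‖ ^ 2 * r ^ (2 * n) := by
  set P : ℂ[X] := ∑ n ∈ Finset.range N, C (μ n) * X ^ n
  have hcoeff (i : ℕ) : P.coeff i = if i < N then μ i else 0 := by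
    simp [P]
  have hsupp : P.support ⊆ Finset.range N := fun i hi ↦ by
    by_contra h
    simp_all [Finset.mem_range]
  convert circleAverage_norm_eval_sq P hsupp r using 3 with z n hn
  · simp [P, eval_finsetSum]
  · simp_all [Finset.mem_range]

theorem norm_sub_sum_range_le_of_hasSum {μ : ℕ → ℂ} {B : ℝ} (hμ : ∀ n, ‖μ n‖ ≤ B) {z w : ℂ}
    (hz : ‖z‖ < 1) (hw : HasSum (fun n ↦ μ n * z ^ n) w) (L : ℕ) :
    ‖w - ∑ n ∈ Finset.range L, μ n * z ^ n‖ ≤ B * ‖z‖ ^ L / (1 - ‖z‖) := by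
  refine ((hasSum_nat_add_iff' L).2 hw).norm_le_of_bounded
    (g := fun n ↦ B * ‖z‖ ^ L * ‖z‖ ^ n) ?_ fun n ↦ ?_
  · simpa [div_eq_mul_inv] using
      (hasSum_geometric_of_lt_one (norm_nonneg z) hz).mul_left (B * ‖z‖ ^ L)
  · rw [norm_mul, norm_pow, mul_assoc, ← pow_add, add_comm L]
    exact mul_le_mul_of_nonneg_right (hμ _) (by positivity)

theorem sum_range_norm_sq_mul_pow_le_add {μ : ℕ → ℂ} {B : ℝ} {F : ℂ → ℂ} (p : ℂ[X])
    (hμ : ∀ n, ‖μ n‖ ≤ B) (hF : ∀ z : ℂ, ‖z‖ < 1 → HasSum (fun n ↦ μ n * z ^ n) (F z))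
    (hle : ∀ z : ℂ, ‖z‖ < 1 → ‖F z‖ ≤ ‖p.eval z‖) {r A : ℝ} (hr₀ : 0 ≤ r) (hr₁ : r < 1)
    (hA : ∀ z : ℂ, ‖z‖ = r → ‖p.eval z‖ ≤ A) (N : ℕ) :
    ∑ n ∈ Finset.range N, ‖μ n‖ ^ 2 * r ^ (2 * n) ≤
      ∑ i ∈ p.support, ‖p.coeff i‖ ^ 2 * r ^ (2 * i) +
        B * r ^ N / (1 - r) * (2 * A + B * r ^ N / (1 - r)) := by
  set τ := B * r ^ N / (1 - r)
  have hτ : 0 ≤ τ := by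
    have := (norm_nonneg _).trans (hμ 0)
    have : 0 < 1 - r := by linarith
    positivity
  have hint {f : ℂ → ℝ} (hf : Continuous f) : CircleIntegrable f 0 r :=
    hf.continuousOn.circleIntegrable'
  rw [← circleAverage_norm_sum_range_sq, ← circleAverage_norm_eval_sq p subset_rfl,
    ← circleAverage_const (τ * (2 * A + τ)) 0 r,
    ← circleAverage_fun_add (hint (by fun_prop)) (circleIntegrable_const _ _ _)]
  refine circleAverage_mono (hint (by fun_prop)) (hint (by fun_prop)) fun z hz ↦ ?_
  rw [mem_sphere_zero_iff_norm, abs_of_nonneg hr₀] at hz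
  have hz₁ : ‖z‖ < 1 := hz ▸ hr₁
  set P := ∑ n ∈ Finset.range N, μ n * z ^ n
  have htail : ‖F z - P‖ ≤ τ := by
    have := norm_sub_sum_range_le_of_hasSum hμ hz₁ (hF z hz₁) N
    rwa [hz] at this
  have hP : ‖P‖ ≤ ‖p.eval z‖ + τ := by
    have := norm_sub_norm_le P (F z)
    rw [norm_sub_rev] at this
    linarith [hle z hz₁]
  nlinarith [norm_nonneg P, norm_nonneg (p.eval z), hA z hz]

theorem sum_range_norm_sq_mul_pow_le {μ : ℕ → ℂ} {B : ℝ} {F : ℂ → ℂ} (p : ℂ[X])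
    (hμ : ∀ n, ‖μ n‖ ≤ B) (hF : ∀ z : ℂ, ‖z‖ < 1 → HasSum (fun n ↦ μ n * z ^ n) (F z))
    (hle : ∀ z : ℂ, ‖z‖ < 1 → ‖F z‖ ≤ ‖p.eval z‖) {r : ℝ} (hr₀ : 0 ≤ r) (hr₁ : r < 1) (L : ℕ) :
    ∑ n ∈ Finset.range L, ‖μ n‖ ^ 2 * r ^ (2 * n) ≤ ∑ i ∈ p.support, ‖p.coeff i‖ ^ 2 := by
  obtain ⟨A, hA⟩ := (isCompact_sphere (0 : ℂ) r).exists_bound_of_continuousOn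
    p.continuous.norm.continuousOn
  have hτ : Tendsto (fun N ↦ B * r ^ N / (1 - r)) atTop (𝓝 0) := by
    simpa [mul_div_right_comm] using
      (tendsto_pow_atTop_nhds_zero_of_lt_one hr₀ hr₁).const_mul (B / (1 - r))
  have hK : ∑ i ∈ p.support, ‖p.coeff i‖ ^ 2 * r ^ (2 * i) ≤ ∑ i ∈ p.support, ‖p.coeff i‖ ^ 2 :=
    Finset.sum_le_sum fun i _ ↦ mul_le_of_le_one_right (by positivity) (pow_le_one₀ hr₀ hr₁.le)
  refine ge_of_tendsto (by simpa using tendsto_const_nhds.add (hτ.mul (hτ.const_add (2 * A))))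
    (eventually_atTop.2 ⟨L, fun N hN ↦ ?_⟩)
  calc ∑ n ∈ Finset.range L, ‖μ n‖ ^ 2 * r ^ (2 * n)
      ≤ ∑ n ∈ Finset.range N, ‖μ n‖ ^ 2 * r ^ (2 * n) :=
        Finset.sum_le_sum_of_subset_of_nonneg (Finset.range_subset_range.2 hN)
          fun _ _ _ ↦ by positivity
    _ ≤ _ := sum_range_norm_sq_mul_pow_le_add p hμ hF hle hr₀ hr₁
        (fun z hz ↦ by simpa using hA z (by simpa using hz)) N
    _ ≤ _ := add_le_add_left hK _

theorem tsum_norm_sq_le_of_norm_le_norm_eval {μ : ℕ → ℂ} {B : ℝ} {F : ℂ → ℂ} (p : ℂ[X])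
    (hμ : ∀ n, ‖μ n‖ ≤ B) (hF : ∀ z : ℂ, ‖z‖ < 1 → HasSum (fun n ↦ μ n * z ^ n) (F z))
    (hle : ∀ z : ℂ, ‖z‖ < 1 → ‖F z‖ ≤ ‖p.eval z‖) :
    ∑' n, ‖μ n‖ ^ 2 ≤ ∑ i ∈ p.support, ‖p.coeff i‖ ^ 2 := by
  refine Real.tsum_le_of_sum_range_le (fun n ↦ by positivity) fun L ↦ ?_
  have hlim : Tendsto (fun r : ℝ ↦ ∑ n ∈ Finset.range L, ‖μ n‖ ^ 2 * r ^ (2 * n)) (𝓝[<] 1)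
      (𝓝 (∑ n ∈ Finset.range L, ‖μ n‖ ^ 2)) := by
    have hcont : Continuous fun r : ℝ ↦ ∑ n ∈ Finset.range L, ‖μ n‖ ^ 2 * r ^ (2 * n) := by
      fun_prop
    simpa using (hcont.tendsto 1).mono_left nhdsWithin_le_nhds
  refine le_of_tendsto hlim ?_
  filter_upwards [Ioo_mem_nhdsLT (zero_lt_one' ℝ)] with r hr
  exact sum_range_norm_sq_mul_pow_le p hμ hF hle hr.1.le hr.2 L

theorem inner_eq_zero_of_forall_norm_add_smul_sq_le {𝕜 E : Type*} [RCLike 𝕜]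
    [NormedAddCommGroup E] [InnerProductSpace 𝕜 E] {u v : E}
    (h : ∀ c : 𝕜, ‖u + c • v‖ ^ 2 ≤ ‖u‖ ^ 2 + ‖c‖ ^ 2 * ‖v‖ ^ 2) : ⟪u, v⟫_𝕜 = 0 := by
  have hc := h (starRingEnd 𝕜 ⟪u, v⟫_𝕜)
  rw [@norm_add_sq 𝕜, inner_smul_right, norm_smul, mul_pow, RCLike.conj_mul,
    ← RCLike.ofReal_pow, RCLike.ofReal_re] at hc
  have hsq : ‖⟪u, v⟫_𝕜‖ ^ 2 = 0 := le_antisymm (by linarith) (sq_nonneg _)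
  exact norm_eq_zero.1 (pow_eq_zero_iff two_ne_zero |>.1 hsq)

/-- If `x` are the Taylor coefficients of `f`, then `shift m x` are those of `z ↦ z ^ m * f z`. -/
def shift {E : Type*} [Zero E] (m : ℕ) (x : ℕ → E) (n : ℕ) : E :=
  if m ≤ n then x (n - m) else 0

section shift
variable {E : Type*}

@[simp] theorem shift_apply_add [Zero E] (m : ℕ) (x : ℕ → E) (n : ℕ) : shift m x (n + m) = x n := by
  simp [shift]

theorem shift_eq_extend [Zero E] (m : ℕ) (x : ℕ → E) : shift m x = Function.extend (· + m) x 0 := by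
  funext n
  by_cases h : m ≤ n
  · obtain ⟨k, rfl⟩ := Nat.exists_eq_add_of_le' h
    rw [shift_apply_add, (add_left_injective m).extend_apply]
  · rw [shift, if_neg h, Function.extend_apply' _ _ _ fun ⟨k, hk⟩ ↦ h (hk ▸ Nat.le_add_left m k)]
    rfl

theorem hasSum_shift_iff [AddCommMonoid E] [TopologicalSpace E] {m : ℕ} {x : ℕ → E} {a : E} :
    HasSum (shift m x) a ↔ HasSum x a := by
  rw [shift_eq_extend, hasSum_extend_zero (add_left_injective m)]

theorem apply_shift {F : Type*} [Zero E] [Zero F] {g : E → F} (hg : g 0 = 0) (m : ℕ)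
    (x : ℕ → E) (n : ℕ) :
    g (shift m x n) = shift m (g ∘ x) n := by
  unfold shift; split_ifs <;> simp [hg]

theorem shift_add [Zero E] (i j : ℕ) (x : ℕ → E) : shift (i + j) x = shift i (shift j x) := by
  funext n
  unfold shift
  split_ifs <;> first | rfl | omega | (congr 1; omega)

end shift

theorem lp.hasSum_norm_sq {ι : Type*} {G : ι → Type*} [∀ i, NormedAddCommGroup (G i)] (x : lp G 2) :
    HasSum (fun i ↦ ‖x i‖ ^ 2) (‖x‖ ^ 2) := by
  simpa using lp.hasSum_norm (p := 2) (by norm_num) x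

theorem memℓp_two_iff {ι : Type*} {G : ι → Type*} [∀ i, NormedAddCommGroup (G i)] {f : ∀ i, G i} :
    Memℓp f 2 ↔ Summable fun i ↦ ‖f i‖ ^ 2 := by
  simpa using memℓp_gen_iff (p := 2) (f := f) (by norm_num)

theorem hasSum_norm_sq_shift (m : ℕ) (x : ℓ²(ℕ, ℂ)) :
    HasSum (fun n ↦ ‖shift m x n‖ ^ 2) (‖x‖ ^ 2) := by
  rw [funext (apply_shift (g := fun z : ℂ ↦ ‖z‖ ^ 2) (by simp) m x)]
  exact hasSum_shift_iff.2 (lp.hasSum_norm_sq x)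

theorem memℓp_shift (m : ℕ) (x : ℓ²(ℕ, ℂ)) : Memℓp (shift m x) 2 :=
  memℓp_two_iff.2 (hasSum_norm_sq_shift m x).summable

noncomputable def lpShift (m : ℕ) : ℓ²(ℕ, ℂ) →ₗᵢ[ℂ] ℓ²(ℕ, ℂ) where
  toFun x := ⟨shift m x, memℓp_shift m x⟩
  map_add' x y := by
    ext n
    show shift m (x + y) n = shift m x n + shift m y n
    unfold shift; split_ifs <;> simp
  map_smul' c x := by
    ext n
    show shift m (c • x) n = c * shift m x n
    unfold shift; split_ifs <;> simp
  norm_map' x := by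
    have h := (lp.hasSum_norm_sq (⟨shift m x, memℓp_shift m x⟩ : ℓ²(ℕ, ℂ))).unique
      (hasSum_norm_sq_shift m x)
    exact (sq_eq_sq₀ (norm_nonneg _) (norm_nonneg _)).1 h

theorem lpShift_apply (m : ℕ) (x : ℓ²(ℕ, ℂ)) (n : ℕ) : lpShift m x n = shift m x n := rfl

theorem lpShift_add (i j : ℕ) (x : ℓ²(ℕ, ℂ)) : lpShift (i + j) x = lpShift i (lpShift j x) := by
  ext n
  show shift (i + j) x n = shift i (shift j x) n
  rw [shift_add]

theorem orthonormal_lpShift {u : ℓ²(ℕ, ℂ)} (hu : ‖u‖ = 1)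
    (h : ∀ m, 0 < m → ⟪u, lpShift m u⟫_ℂ = 0) : Orthonormal ℂ fun j ↦ lpShift j u := by
  refine ⟨fun j ↦ by rw [LinearIsometry.norm_map, hu], fun i j hij ↦ ?_⟩
  wlog hlt : i < j generalizing i j
  · exact inner_eq_zero_symm.1 (this j i hij.symm (by omega))
  obtain ⟨k, rfl⟩ := Nat.exists_eq_add_of_lt hlt
  show ⟪lpShift i u, lpShift (i + (k + 1)) u⟫_ℂ = 0
  rw [lpShift_add, LinearIsometry.inner_map_map]
  exact h _ (Nat.succ_pos k)

theorem conditionC_of_orthonormal_lpShift (u : ℓ²(ℕ, ℂ)) (hu : Orthonormal ℂ fun j ↦ lpShift j u) :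
    ConditionC u := by
  intro a ha
  set A : ℓ²(ℕ, ℂ) := ⟨a, memℓp_two_iff.2 ha⟩
  set T := hu.orthogonalFamily.linearIsometry
  have hT : HasSum (fun j ↦ a j • lpShift j u) (T A) := by
    simpa using hu.orthogonalFamily.hasSum_linearIsometry A
  have hcoord (n : ℕ) : T A n = ∑ j ∈ Finset.range (n + 1), a j * u (n - j) := by
    refine (hT.mapL (lp.evalCLM ℂ _ 2 n)).unique (hasSum_sum_of_ne_finset_zero fun j hj ↦ ?_)
      |>.trans (Finset.sum_congr rfl fun j hj ↦ ?_) <;>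
    simp_all [lp.evalCLM, lpShift_apply, shift]
  calc ∑' n, ‖∑ j ∈ Finset.range (n + 1), a j * u (n - j)‖ ^ 2 = ∑' n, ‖T A n‖ ^ 2 := by
        simp only [hcoord]
    _ = ‖T A‖ ^ 2 := (lp.hasSum_norm_sq _).tsum_eq
    _ = ‖A‖ ^ 2 := by rw [T.norm_map]
    _ = ∑' n, ‖a n‖ ^ 2 := (lp.hasSum_norm_sq A).tsum_eq.symm

theorem norm_add_smul_lpShift_sq_le {φ : ℂ → ℂ} {u : ℓ²(ℕ, ℂ)}
    (htaylor : ∀ z : ℂ, ‖z‖ < 1 → HasSum (fun n ↦ u n * z ^ n) (φ z))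
    (hbound : ∀ z : ℂ, ‖z‖ < 1 → ‖φ z‖ ≤ 1) {m : ℕ} (hm : 0 < m) (c : ℂ) :
    ‖u + c • lpShift m u‖ ^ 2 ≤ 1 + ‖c‖ ^ 2 := by
  set v := u + c • lpShift m u
  set p : ℂ[X] := 1 + C c * X ^ m
  have hv (n : ℕ) : v n = u n + c * shift m u n := rfl
  have hF (z : ℂ) (hz : ‖z‖ < 1) : HasSum (fun n ↦ v n * z ^ n) (p.eval z * φ z) := by
    have hshift : HasSum (fun n ↦ shift m u n * z ^ n) (z ^ m * φ z) := by
      have : (fun n ↦ shift m u n * z ^ n) = shift m fun n ↦ z ^ m * (u n * z ^ n) := by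
        funext n
        unfold shift
        split_ifs with h
        · rw [← pow_sub_mul_pow z h]
          ring
        · simp
      exact this ▸ hasSum_shift_iff.2 ((htaylor z hz).mul_left _)
    simpa [p, hv, add_mul, mul_assoc] using (htaylor z hz).add (hshift.mul_left c)
  have hle (z : ℂ) (hz : ‖z‖ < 1) : ‖p.eval z * φ z‖ ≤ ‖p.eval z‖ := by
    rw [norm_mul]
    exact mul_le_of_le_one_right (norm_nonneg _) (hbound z hz)
  have hp : ∑ i ∈ p.support, ‖p.coeff i‖ ^ 2 = 1 + ‖c‖ ^ 2 := by
    have hsupp : p.support ⊆ {0, m} := fun i hi ↦ by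
      contrapose! hi
      simp only [Finset.mem_insert, Finset.mem_singleton, not_or] at hi
      simp [p, coeff_one, hi.1, hi.2]
    rw [Finset.sum_subset hsupp fun i _ hi ↦ by simp [notMem_support_iff.1 hi],
      Finset.sum_pair hm.ne]
    simp [p, coeff_one, hm.ne, hm.ne']
  rw [← (lp.hasSum_norm_sq v).tsum_eq, ← hp]
  exact tsum_norm_sq_le_of_norm_le_norm_eval p (lp.norm_apply_le_norm two_ne_zero v) hF hle

theorem inner_lpShift_eq_zero {φ : ℂ → ℂ} {u : ℓ²(ℕ, ℂ)}
    (htaylor : ∀ z : ℂ, ‖z‖ < 1 → HasSum (fun n ↦ u n * z ^ n) (φ z))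
    (hbound : ∀ z : ℂ, ‖z‖ < 1 → ‖φ z‖ ≤ 1) (hu : ‖u‖ = 1) {m : ℕ} (hm : 0 < m) :
    ⟪u, lpShift m u⟫_ℂ = 0 :=
  inner_eq_zero_of_forall_norm_add_smul_sq_le fun c ↦ by
    simpa [hu] using norm_add_smul_lpShift_sq_le htaylor hbound hm c

theorem bounded_with_norm_one_implies_conditionC_general (φ : ℂ → ℂ) (l : ℕ → ℂ)
    (htaylor : ∀ z : ℂ, ‖z‖ < 1 → HasSum (fun n : ℕ => l n * z ^ n) (φ z))
    (hbound : ∀ z : ℂ, ‖z‖ < 1 → ‖φ z‖ ≤ 1)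
    (hnorm : ∑' n : ℕ, ‖l n‖ ^ 2 = 1) :
    ConditionC l := by
  have hsum : Summable fun n ↦ ‖l n‖ ^ 2 := by
    by_contra h
    simp [tsum_eq_zero_of_not_summable h] at hnorm
  let u : ℓ²(ℕ, ℂ) := ⟨l, memℓp_two_iff.2 hsum⟩
  have hu : ‖u‖ = 1 := (pow_eq_one_iff_of_nonneg (norm_nonneg u) two_ne_zero).1
    ((lp.hasSum_norm_sq u).tsum_eq.symm.trans hnorm)
  have htaylor_u : ∀ z : ℂ, ‖z‖ < 1 → HasSum (fun n ↦ u n * z ^ n) (φ z) := htaylor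
  exact conditionC_of_orthonormal_lpShift u
    (orthonormal_lpShift hu fun m hm ↦ inner_lpShift_eq_zero htaylor_u hbound hu hm)

/-- If `φ` is analytic on the open unit disk with Taylor coefficients `(λ_n)` at `0`,
`|φ(z)| ≤ 1` on the disk, and `∑_n |λ_n|² = 1`, then `(λ_n)` satisfies condition (c). -/
theorem bounded_with_norm_one_implies_conditionC (φ : ℂ → ℂ) (l : ℕ → ℂ)
    (hanalytic : AnalyticOnNhd ℂ φ (Metric.ball (0 : ℂ) 1))
    (htaylor : ∀ z : ℂ, ‖z‖ < 1 → HasSum (fun n : ℕ => l n * z ^ n) (φ z))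
    (hbound : ∀ z : ℂ, ‖z‖ < 1 → ‖φ z‖ ≤ 1)
    (hnorm : ∑' n : ℕ, ‖l n‖ ^ 2 = 1) :
    ConditionC l :=
  bounded_with_norm_one_implies_conditionC_general φ l htaylor hbound hnorm
end

section
/- Let (λ_n)_{n≥0} be a sequence of complex numbers satisfying condition (c): for every square-summable complex sequence (a_n)_{n≥0}, ∑_{n=0}^∞ |∑_{j=0}^n a_j λ_{n-j}|² = ∑_{n=0}^∞ |a_n|². Then ∑_{n=0}^∞ |λ_n|² = 1, the power series φ(z) = ∑_{n=0}^∞ λ_n z^n converges on the open unit disk 𝔻 = {z ∈ ℂ : |z| < 1}, and |φ(z)| ≤ 1 for all z ∈ 𝔻. -/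
open Finset

lemma summable_of_tsum_ne_zero {ι α : Type*} [AddCommMonoid α] [TopologicalSpace α]
    {f : ι → α} (h : ∑' i, f i ≠ 0) : Summable f :=
  by_contra fun hf => h (tsum_eq_zero_of_not_summable hf)

lemma Real.summable_mul_of_summable_sq {ι : Type*} {f g : ι → ℝ}
    (hf : Summable fun i => f i ^ 2) (hg : Summable fun i => g i ^ 2) :
    Summable fun i => f i * g i :=
  Summable.of_norm_bounded ((hf.add hg).div_const 2) fun i => by
    rw [Real.norm_eq_abs, abs_mul]
    nlinarith [sq_nonneg (|f i| - |g i|), sq_abs (f i), sq_abs (g i)]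

lemma Real.tsum_mul_le_sqrt_mul_sqrt {ι : Type*} {f g : ι → ℝ}
    (hf : Summable fun i => f i ^ 2) (hg : Summable fun i => g i ^ 2) :
    ∑' i, f i * g i ≤ √(∑' i, f i ^ 2) * √(∑' i, g i ^ 2) :=
  (Real.summable_mul_of_summable_sq hf hg).tsum_le_of_sum_le fun s =>
    (Real.sum_mul_le_sqrt_mul_sqrt s f g).trans <| by
      gcongr
      · exact hf.sum_le_tsum s fun i _ => sq_nonneg _
      · exact hg.sum_le_tsum s fun i _ => sq_nonneg _

lemma norm_tsum_mul_le_sqrt_mul_sqrt {ι R : Type*} [NonUnitalSeminormedRing R] {f g : ι → R}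
    (hf : Summable fun i => ‖f i‖ ^ 2) (hg : Summable fun i => ‖g i‖ ^ 2) :
    ‖∑' i, f i * g i‖ ≤ √(∑' i, ‖f i‖ ^ 2) * √(∑' i, ‖g i‖ ^ 2) := by
  have hfg := Real.summable_mul_of_summable_sq hf hg
  have hnorm : Summable fun i => ‖f i * g i‖ :=
    hfg.of_nonneg_of_le (fun _ => norm_nonneg _) fun i => norm_mul_le _ _
  calc ‖∑' i, f i * g i‖ ≤ ∑' i, ‖f i * g i‖ := norm_tsum_le_tsum_norm hnorm
    _ ≤ ∑' i, ‖f i‖ * ‖g i‖ := hnorm.tsum_le_tsum (fun i => norm_mul_le _ _) hfg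
    _ ≤ _ := Real.tsum_mul_le_sqrt_mul_sqrt hf hg

section PowerSeries

variable {𝕜 : Type*} [NormedField 𝕜]

lemma summable_norm_mul_pow_of_bounded {l : ℕ → 𝕜} {C : ℝ} (hl : ∀ n, ‖l n‖ ≤ C)
    {z : 𝕜} (hz : ‖z‖ < 1) : Summable fun n => ‖l n * z ^ n‖ :=
  ((summable_geometric_of_lt_one (norm_nonneg z) hz).mul_left C).of_nonneg_of_le
    (fun _ => norm_nonneg _) fun n => by
      rw [norm_mul, norm_pow]
      gcongr
      exact hl n

lemma norm_pow_sq_eq_sq_pow (z : 𝕜) (n : ℕ) : ‖z ^ n‖ ^ 2 = (‖z‖ ^ 2) ^ n := by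
  rw [norm_pow, ← pow_mul, ← pow_mul, mul_comm]

lemma hasSum_norm_pow_sq {z : 𝕜} (hz : ‖z‖ < 1) :
    HasSum (fun n => ‖z ^ n‖ ^ 2) (1 - ‖z‖ ^ 2)⁻¹ := by
  simp only [norm_pow_sq_eq_sq_pow]
  exact hasSum_geometric_of_lt_one (by positivity) (by nlinarith [norm_nonneg z])

lemma tsum_sum_range_pow_mul_mul_pow [CompleteSpace 𝕜] {l : ℕ → 𝕜} {w z : 𝕜}
    (hwz : ‖w * z‖ < 1) (hl : Summable fun n => ‖l n * z ^ n‖) :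
    ∑' n, (∑ j ∈ range (n + 1), w ^ j * l (n - j)) * z ^ n =
      (1 - w * z)⁻¹ * ∑' n, l n * z ^ n := by
  have hgeo : Summable fun j => ‖(w * z) ^ j‖ := by
    simpa using summable_geometric_of_lt_one (norm_nonneg _) hwz
  rw [← tsum_geometric_of_norm_lt_one hwz,
    tsum_mul_tsum_eq_tsum_sum_range_of_summable_norm hgeo hl]
  refine tsum_congr fun n => ?_
  rw [sum_mul]
  refine sum_congr rfl fun j hj => ?_
  rw [← pow_mul_pow_sub z (Nat.le_of_lt_succ (mem_range.mp hj))]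
  ring

end PowerSeries

namespace ConditionC

variable {l : ℕ → ℂ}

theorem tsum_norm_sq_eq_one (hc : ConditionC l) : ∑' n, ‖l n‖ ^ 2 = 1 := by
  have hδ := hc (Pi.single 0 1) (summable_of_ne_finset_zero (s := {0}) fun n hn => by
    simp [mem_singleton.not.mp hn])
  have hconv : ∀ n, ∑ j ∈ range (n + 1), (Pi.single 0 1 : ℕ → ℂ) j * l (n - j) = l n :=
    fun n => by simp [Pi.single_apply]
  simpa [hconv, Pi.single_apply, apply_ite] using hδ

theorem norm_le_one (hc : ConditionC l) (n : ℕ) : ‖l n‖ ≤ 1 := by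
  have hsum := summable_of_tsum_ne_zero (hc.tsum_norm_sq_eq_one.symm ▸ one_ne_zero)
  have hn := hsum.le_tsum n fun m _ => sq_nonneg ‖l m‖
  rw [hc.tsum_norm_sq_eq_one] at hn
  nlinarith [norm_nonneg (l n)]

theorem norm_tsum_mul_pow_le_one (hc : ConditionC l) {z : ℂ} (hz : ‖z‖ < 1) :
    ‖∑' n, l n * z ^ n‖ ≤ 1 := by
  have hz2 : ‖z‖ ^ 2 < 1 := by nlinarith [norm_nonneg z]
  set S := (1 - ‖z‖ ^ 2)⁻¹
  have hS : 0 < S := inv_pos.mpr (sub_pos.mpr hz2)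
  have hgeo := hasSum_norm_pow_sq hz
  set b := fun n => ∑ j ∈ range (n + 1), (starRingEnd ℂ z) ^ j * l (n - j)
  have hb : ∑' n, ‖b n‖ ^ 2 = S := by
    rw [hc _ (by simpa using hgeo.summable)]
    simpa using hgeo.tsum_eq
  have hbz : ‖∑' n, b n * z ^ n‖ ≤ S :=
    calc ‖∑' n, b n * z ^ n‖ ≤ √(∑' n, ‖b n‖ ^ 2) * √(∑' n, ‖z ^ n‖ ^ 2) :=
          norm_tsum_mul_le_sqrt_mul_sqrt (summable_of_tsum_ne_zero (hb ▸ hS.ne')) hgeo.summable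
      _ = S := by rw [hb, hgeo.tsum_eq, Real.mul_self_sqrt hS.le]
  have hwz : ‖starRingEnd ℂ z * z‖ < 1 := by rwa [norm_mul, Complex.norm_conj, ← sq]
  have hfactor : ‖(1 - starRingEnd ℂ z * z)⁻¹‖ = S := by
    rw [Complex.conj_mul', norm_inv, ← Complex.ofReal_pow, ← Complex.ofReal_one,
      ← Complex.ofReal_sub, Complex.norm_real, Real.norm_of_nonneg (sub_pos.mpr hz2).le]
  rw [tsum_sum_range_pow_mul_mul_pow hwz (summable_norm_mul_pow_of_bounded hc.norm_le_one hz),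
    norm_mul, hfactor] at hbz
  exact le_of_mul_le_mul_left (hbz.trans_eq (mul_one S).symm) hS

end ConditionC

/-- If `(λ_n)` satisfies condition (c), then `∑_n |λ_n|² = 1`, the power series
`∑ λ_n z^n` converges on the open unit disk, and its sum is bounded by one there. -/
theorem conditionC_implies_norm_one_and_bounded (l : ℕ → ℂ) (hc : ConditionC l) :
    (∑' n : ℕ, ‖l n‖ ^ 2 = 1) ∧
      ∀ z : ℂ, ‖z‖ < 1 →
        Summable (fun n : ℕ => l n * z ^ n) ∧ ‖∑' n : ℕ, l n * z ^ n‖ ≤ 1 :=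
  ⟨hc.tsum_norm_sq_eq_one, fun _ hz =>
    ⟨(summable_norm_mul_pow_of_bounded hc.norm_le_one hz).of_norm,
      hc.norm_tsum_mul_pow_le_one hz⟩⟩
end

section
/- For a sequence (λ_n)_{n≥0} of complex numbers, condition (c) holds if and only if condition (d) holds. Here condition (c) is: for every square-summable complex sequence (a_n)_{n≥0}, ∑_{n=0}^∞ |∑_{j=0}^n a_j λ_{n-j}|² = ∑_{n=0}^∞ |a_n|²; and condition (d) is: for every non-negative integer N and all (a_0,…,a_N) ∈ ℂ^{N+1}, ∑_{n=0}^N |∑_{j=0}^n a_j λ_{n-j}|² + ∑_{n=N+1}^∞ |∑_{j=0}^N a_j λ_{n-j}|² = ∑_{n=0}^N |a_n|². -/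
/-- Condition (d): for every `N` and every `(a 0, …, a N) ∈ ℂ^{N+1}`,
`∑_{n=0}^N |∑_{j=0}^n a_j λ_{n-j}|² + ∑_{n=N+1}^∞ |∑_{j=0}^N a_j λ_{n-j}|²
  = ∑_{n=0}^N |a_n|²`. -/
def ConditionD (l : ℕ → ℂ) : Prop :=
  ∀ (N : ℕ) (a : ℕ → ℂ),
    ∑ n ∈ Finset.range (N + 1), ‖∑ j ∈ Finset.range (n + 1), a j * l (n - j)‖ ^ 2
      + ∑' m : ℕ, ‖∑ j ∈ Finset.range (N + 1), a j * l (N + 1 + m - j)‖ ^ 2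
    = ∑ n ∈ Finset.range (N + 1), ‖a n‖ ^ 2

open Filter Topology Finset

section CauchyProduct

variable {R : Type*} [Semiring R]

def cauchyProduct (a b : ℕ → R) (n : ℕ) : R :=
  ∑ j ∈ range (n + 1), a j * b (n - j)

theorem cauchyProduct_zero_left (b : ℕ → R) : cauchyProduct 0 b = 0 := by
  ext n
  simp [cauchyProduct]

theorem cauchyProduct_add_left (a a' b : ℕ → R) :
    cauchyProduct (a + a') b = cauchyProduct a b + cauchyProduct a' b := by
  ext n
  simp [cauchyProduct, add_mul, sum_add_distrib]

variable (a b : ℕ → R) {K n : ℕ}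

theorem cauchyProduct_indicator_Iio_of_lt (h : n < K) :
    cauchyProduct ((Set.Iio K).indicator a) b n = cauchyProduct a b n :=
  sum_congr rfl fun j hj => by
    rw [Set.indicator_of_mem (by simp at hj ⊢; omega)]

theorem cauchyProduct_indicator_Iio_of_le (h : K ≤ n + 1) :
    cauchyProduct ((Set.Iio K).indicator a) b n = ∑ j ∈ range K, a j * b (n - j) := by
  rw [cauchyProduct, ← sum_subset (range_subset_range.mpr h)]
  · exact sum_congr rfl fun j hj => by rw [Set.indicator_of_mem (by simpa using hj)]
  · intro j _ hj
    rw [Set.indicator_of_notMem (by simpa using hj), zero_mul]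

theorem cauchyProduct_indicator_Ici_of_lt (h : n < K) :
    cauchyProduct ((Set.Ici K).indicator a) b n = 0 :=
  sum_eq_zero fun j hj => by
    rw [Set.indicator_of_notMem (by simp at hj ⊢; omega), zero_mul]

end CauchyProduct

section NormSq

variable {ι E : Type*} [SeminormedAddCommGroup E]

theorem norm_sub_sq_le (x y : E) : ‖x - y‖ ^ 2 ≤ 2 * (‖x‖ ^ 2 + ‖y‖ ^ 2) :=
  (pow_le_pow_left₀ (norm_nonneg _) (norm_sub_le x y) 2).trans add_sq_le

theorem tsum_norm_sub_sq_le {f g : ι → E} (hf : Summable fun i => ‖f i‖ ^ 2)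
    (hg : Summable fun i => ‖g i‖ ^ 2) :
    ∑' i, ‖f i - g i‖ ^ 2 ≤ 2 * (∑' i, ‖f i‖ ^ 2 + ∑' i, ‖g i‖ ^ 2) := by
  have hfg : Summable fun i => 2 * (‖f i‖ ^ 2 + ‖g i‖ ^ 2) := (hf.add hg).mul_left 2
  calc ∑' i, ‖f i - g i‖ ^ 2
      ≤ ∑' i, 2 * (‖f i‖ ^ 2 + ‖g i‖ ^ 2) :=
        (hfg.of_nonneg_of_le (fun _ => by positivity) fun i => norm_sub_sq_le _ _).tsum_mono hfg
          fun i => norm_sub_sq_le _ _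
    _ = 2 * (∑' i, ‖f i‖ ^ 2 + ∑' i, ‖g i‖ ^ 2) := by rw [tsum_mul_left, hf.tsum_add hg]

end NormSq

variable {l : ℕ → ℂ}

theorem ConditionC.tsum_norm_sq_cauchyProduct (hc : ConditionC l) {a : ℕ → ℂ}
    (ha : Summable fun n => ‖a n‖ ^ 2) :
    ∑' n, ‖cauchyProduct a l n‖ ^ 2 = ∑' n, ‖a n‖ ^ 2 :=
  hc a ha

theorem ConditionD.sum_add_tsum_eq (hd : ConditionD l) (N : ℕ) (a : ℕ → ℂ) :
    ∑ n ∈ range (N + 1), ‖cauchyProduct a l n‖ ^ 2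
      + ∑' m, ‖∑ j ∈ range (N + 1), a j * l (N + 1 + m - j)‖ ^ 2
    = ∑ n ∈ range (N + 1), ‖a n‖ ^ 2 :=
  hd N a

theorem ConditionC.summable_cauchyProduct (hc : ConditionC l) {a : ℕ → ℂ}
    (ha : Summable fun n => ‖a n‖ ^ 2) : Summable fun n => ‖cauchyProduct a l n‖ ^ 2 := by
  by_contra hs
  -- The junk value `0` of the left side of (c) forces `a = 0`, whose product is summable.
  have hzero : ∑' n, ‖a n‖ ^ 2 = 0 :=
    (hc.tsum_norm_sq_cauchyProduct ha).symm.trans (tsum_eq_zero_of_not_summable hs)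
  have ha0 : a = 0 := funext fun n => by
    have h := congrFun ((hasSum_zero_iff_of_nonneg (f := fun n => ‖a n‖ ^ 2)
      fun _ => by positivity).mp (hzero ▸ ha.hasSum)) n
    exact norm_eq_zero.mp (pow_eq_zero_iff two_ne_zero |>.mp h)
  exact hs (by simp [ha0, cauchyProduct_zero_left])

theorem ConditionC.conditionD (hc : ConditionC l) : ConditionD l := by
  intro N a
  set b := (Set.Iio (N + 1)).indicator a with hb_def
  have hb : ∀ j ∉ range (N + 1), ‖b j‖ ^ 2 = 0 := fun j hj => by
    simp [hb_def, Set.indicator_of_notMem (show j ∉ Set.Iio (N + 1) by simpa using hj)]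
  have hbs : Summable fun n => ‖b n‖ ^ 2 := summable_of_ne_finset_zero hb
  have hnorm : ∑' n, ‖b n‖ ^ 2 = ∑ n ∈ range (N + 1), ‖a n‖ ^ 2 := by
    rw [tsum_eq_sum hb]
    exact sum_congr rfl fun j hj => by
      rw [hb_def, Set.indicator_of_mem (show j ∈ Set.Iio (N + 1) by simpa using hj)]
  rw [← hnorm, ← hc.tsum_norm_sq_cauchyProduct hbs,
    ← (hc.summable_cauchyProduct hbs).sum_add_tsum_nat_add (N + 1)]
  congr 1
  · exact sum_congr rfl fun n hn => by
      rw [cauchyProduct_indicator_Iio_of_lt _ _ (mem_range.mp hn)]; rfl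
  · exact tsum_congr fun m => by
      rw [cauchyProduct_indicator_Iio_of_le _ _ (by omega), add_comm m]

theorem ConditionD.sum_range_le (hd : ConditionD l) (N : ℕ) (a : ℕ → ℂ) :
    ∑ n ∈ range N, ‖cauchyProduct a l n‖ ^ 2 ≤ ∑ n ∈ range (N + 1), ‖a n‖ ^ 2 := by
  have htail : 0 ≤ ∑' m, ‖∑ j ∈ range (N + 1), a j * l (N + 1 + m - j)‖ ^ 2 :=
    tsum_nonneg fun _ => by positivity
  have hmono : ∑ n ∈ range N, ‖cauchyProduct a l n‖ ^ 2
      ≤ ∑ n ∈ range (N + 1), ‖cauchyProduct a l n‖ ^ 2 :=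
    sum_le_sum_of_subset_of_nonneg (range_subset_range.mpr N.le_succ) fun _ _ _ => by positivity
  linarith [hd.sum_add_tsum_eq N a]

theorem ConditionD.summable_cauchyProduct (hd : ConditionD l) {a : ℕ → ℂ}
    (ha : Summable fun n => ‖a n‖ ^ 2) :
    Summable (fun n => ‖cauchyProduct a l n‖ ^ 2) ∧
      ∑' n, ‖cauchyProduct a l n‖ ^ 2 ≤ ∑' n, ‖a n‖ ^ 2 := by
  have hle : ∀ N, ∑ n ∈ range N, ‖cauchyProduct a l n‖ ^ 2 ≤ ∑' n, ‖a n‖ ^ 2 := fun N =>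
    (hd.sum_range_le N a).trans (ha.sum_le_tsum _ fun _ _ => by positivity)
  have hs := summable_of_sum_range_le (fun _ => by positivity) hle
  exact ⟨hs, hs.tsum_le_of_sum_range_le hle⟩

theorem ConditionD.tail_le (hd : ConditionD l) {a : ℕ → ℂ}
    (ha : Summable fun n => ‖a n‖ ^ 2) (N : ℕ) :
    ∑' m, ‖∑ j ∈ range (N + 1), a j * l (N + 1 + m - j)‖ ^ 2 ≤
      2 * (∑' m, ‖cauchyProduct a l (m + (N + 1))‖ ^ 2 + ∑' m, ‖a (m + (N + 1))‖ ^ 2) := by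
  set b := (Set.Ici (N + 1)).indicator a with hb_def
  have hsplit : ∀ m, ∑ j ∈ range (N + 1), a j * l (N + 1 + m - j)
      = cauchyProduct a l (m + (N + 1)) - cauchyProduct b l (m + (N + 1)) := fun m => by
    rw [show N + 1 + m = m + (N + 1) by omega,
      ← cauchyProduct_indicator_Iio_of_le a l (show N + 1 ≤ m + (N + 1) + 1 by omega),
      eq_sub_iff_add_eq, hb_def, ← Set.compl_Iio, ← Pi.add_apply, ← cauchyProduct_add_left,
      Set.indicator_self_add_compl]
  have hb : Summable fun n => ‖b n‖ ^ 2 := ha.of_nonneg_of_le (fun _ => by positivity)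
    fun n => pow_le_pow_left₀ (norm_nonneg _) (norm_indicator_le_norm_self _ _) 2
  obtain ⟨hbs, hble⟩ := hd.summable_cauchyProduct hb
  have hbtail : ∑' m, ‖cauchyProduct b l (m + (N + 1))‖ ^ 2 ≤ ∑' m, ‖a (m + (N + 1))‖ ^ 2 :=
    calc ∑' m, ‖cauchyProduct b l (m + (N + 1))‖ ^ 2
        = ∑' n, ‖cauchyProduct b l n‖ ^ 2 := by
          rw [← hbs.sum_add_tsum_nat_add (N + 1), sum_eq_zero, zero_add]
          intro n hn
          rw [cauchyProduct_indicator_Ici_of_lt _ _ (mem_range.mp hn), norm_zero, zero_pow two_ne_zero]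
      _ ≤ ∑' n, ‖b n‖ ^ 2 := hble
      _ = ∑' m, ‖a (m + (N + 1))‖ ^ 2 := by
          rw [← hb.sum_add_tsum_nat_add (N + 1), sum_eq_zero, zero_add]
          · exact tsum_congr fun m => by rw [hb_def, Set.indicator_of_mem (by simp)]
          · intro n hn
            rw [hb_def, Set.indicator_of_notMem (by simpa using hn), norm_zero, zero_pow two_ne_zero]
  calc ∑' m, ‖∑ j ∈ range (N + 1), a j * l (N + 1 + m - j)‖ ^ 2
      = ∑' m, ‖cauchyProduct a l (m + (N + 1)) - cauchyProduct b l (m + (N + 1))‖ ^ 2 :=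
        tsum_congr fun m => by rw [hsplit]
    _ ≤ 2 * (∑' m, ‖cauchyProduct a l (m + (N + 1))‖ ^ 2
          + ∑' m, ‖cauchyProduct b l (m + (N + 1))‖ ^ 2) :=
        tsum_norm_sub_sq_le ((summable_nat_add_iff (f := fun n => ‖cauchyProduct a l n‖ ^ 2)
          (N + 1)).mpr (hd.summable_cauchyProduct ha).1)
          ((summable_nat_add_iff (f := fun n => ‖cauchyProduct b l n‖ ^ 2) (N + 1)).mpr hbs)
    _ ≤ _ := by gcongr

theorem ConditionD.tendsto_tail (hd : ConditionD l) {a : ℕ → ℂ}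
    (ha : Summable fun n => ‖a n‖ ^ 2) :
    Tendsto (fun N => ∑' m, ‖∑ j ∈ range (N + 1), a j * l (N + 1 + m - j)‖ ^ 2)
      atTop (𝓝 0) := by
  have hupper : Tendsto (fun N => 2 * (∑' m, ‖cauchyProduct a l (m + (N + 1))‖ ^ 2
      + ∑' m, ‖a (m + (N + 1))‖ ^ 2)) atTop (𝓝 0) := by
    simpa using (((tendsto_sum_nat_add fun n => ‖cauchyProduct a l n‖ ^ 2).add
      (tendsto_sum_nat_add fun n => ‖a n‖ ^ 2)).comp
      (tendsto_add_atTop_nat 1)).const_mul 2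
  exact tendsto_of_tendsto_of_tendsto_of_le_of_le tendsto_const_nhds hupper
    (fun _ => tsum_nonneg fun _ => by positivity) (hd.tail_le ha)

theorem ConditionD.conditionC (hd : ConditionD l) : ConditionC l := by
  intro a ha
  have hlim := ((hd.summable_cauchyProduct ha).1.tendsto_sum_tsum_nat.comp
    (tendsto_add_atTop_nat 1)).add (hd.tendsto_tail ha)
  rw [add_zero] at hlim
  refine tendsto_nhds_unique hlim ?_
  simp only [Function.comp_def, hd.sum_add_tsum_eq]
  exact ha.tendsto_sum_tsum_nat.comp (tendsto_add_atTop_nat 1)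

/-- For a complex sequence `(λ_n)`, condition (c) holds iff condition (d) holds. -/
theorem conditionC_iff_conditionD (l : ℕ → ℂ) : ConditionC l ↔ ConditionD l :=
  ⟨ConditionC.conditionD, ConditionD.conditionC⟩
end
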